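/- arXiv:2304.07798 — 3 statements merged into one kernel-verified Lean document; each statement's English description precedes it below -/
import Mathlib

section
/- Let G be any finite group with |G| ≥ 3 and let {g,h,i} = {1,2,3}. Then E_g*A_hE_i*A_hE_g* = E_g*. -/
open Matrix

abbrev XG (G : Type) [Group G] : Type := {v : Fin 3 → G // v 0 * v 1 = v 2}

def cIdx : Fin 5 → Fin 3
  | 0 => 0
  | 1 => 0
  | 2 => 1
  | 3 => 2
  | 4 => 0

def rel {G : Type} [Group G] (i : Fin 5) (y z : XG G) : Prop :=
  if i = 0 then y = z
  else if i = 4 then ∀ d : Fin 3, y.1 d ≠ z.1 d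
  else y ≠ z ∧ y.1 (cIdx i) = z.1 (cIdx i)

instance {G : Type} [Group G] [DecidableEq G] (i : Fin 5) (y z : XG G) :
    Decidable (rel i y z) := by
  unfold rel
  infer_instance

def Adj (F : Type) [Field F] {G : Type} [Group G] [DecidableEq G] (i : Fin 5) :
    Matrix (XG G) (XG G) F :=
  Matrix.of fun y z => if rel i y z then 1 else 0

def DualE (F : Type) [Field F] {G : Type} [Group G] [DecidableEq G] (x : XG G) (i : Fin 5) :
    Matrix (XG G) (XG G) F :=
  Matrix.of fun y z => if y = z ∧ rel i x y then 1 else 0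

def AllOne (F : Type) [Field F] (G : Type) [Group G] : Matrix (XG G) (XG G) F :=
  Matrix.of fun _ _ => 1

def genSet (F : Type) [Field F] (G : Type) [Group G] [Fintype G] [DecidableEq G]
    (x : XG G) : Set (Matrix (XG G) (XG G) F) :=
  {M | ∃ a b c : Fin 5, M = DualE F x a * Adj F b * DualE F x c}

def TerwilligerAlg (F : Type) [Field F] (G : Type) [Group G] [Fintype G] [DecidableEq G]
    (x : XG G) : Subalgebra F (Matrix (XG G) (XG G) F) :=
  Algebra.adjoin F (genSet F G x)

/-- An element of `XG G` is determined by any two distinct coordinates. -/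
lemma XG.ext2 {G : Type} [Group G] {v w : XG G} {a b : Fin 3} (hab : a ≠ b)
    (ha : v.1 a = w.1 a) (hb : v.1 b = w.1 b) : v = w := by
  obtain ⟨v, hv⟩ := v
  obtain ⟨w, hw⟩ := w
  apply Subtype.ext
  funext d
  simp only at ha hb
  have h01 : v 0 = w 0 → v 1 = w 1 → v d = w d := by
    intro h0 h1
    fin_cases d
    · exact h0
    · exact h1
    · show v 2 = w 2
      rw [← hv, ← hw, h0, h1]
  have h02 : v 0 = w 0 → v 2 = w 2 → v d = w d := by
    intro h0 h2
    have key : v 0 * v 1 = w 0 * w 1 := hv.trans (h2.trans hw.symm)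
    rw [h0] at key
    have h1 : v 1 = w 1 := mul_left_cancel key
    fin_cases d
    · exact h0
    · exact h1
    · exact h2
  have h12 : v 1 = w 1 → v 2 = w 2 → v d = w d := by
    intro h1 h2
    have key : v 0 * v 1 = w 0 * w 1 := hv.trans (h2.trans hw.symm)
    rw [h1] at key
    have h0 : v 0 = w 0 := mul_right_cancel key
    fin_cases d
    · exact h0
    · exact h1
    · exact h2
  fin_cases a <;> fin_cases b
  · exact absurd rfl hab
  · exact h01 ha hb
  · exact h02 ha hb
  · exact h01 hb ha
  · exact absurd rfl hab
  · exact h12 ha hb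
  · exact h02 hb ha
  · exact h12 hb ha
  · exact absurd rfl hab

/-- Given two distinct coordinates and prescribed values, there is an element of `XG G`. -/
lemma XG.exists2 {G : Type} [Group G] {b c : Fin 3} (hbc : b ≠ c) (p q : G) :
    ∃ u : XG G, u.1 b = p ∧ u.1 c = q := by
  fin_cases b <;> fin_cases c
  · exact absurd rfl hbc
  · exact ⟨⟨![p, q, p * q], by simp⟩, by simp, by simp⟩
  · exact ⟨⟨![p, p⁻¹ * q, q], by simp⟩, by simp, by simp⟩
  · exact ⟨⟨![q, p, q * p], by simp⟩, by simp, by simp⟩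
  · exact absurd rfl hbc
  · exact ⟨⟨![q * p⁻¹, p, q], by simp⟩, by simp, by simp⟩
  · exact ⟨⟨![q, q⁻¹ * p, p], by simp⟩, by simp, by simp⟩
  · exact ⟨⟨![p * q⁻¹, q, p], by simp⟩, by simp, by simp⟩
  · exact absurd rfl hbc

lemma rel_iff {G : Type} [Group G] {j : Fin 5} (hj0 : j ≠ 0) (hj4 : j ≠ 4) (y z : XG G) :
    rel j y z ↔ y ≠ z ∧ y.1 (cIdx j) = z.1 (cIdx j) := by
  unfold rel
  rw [if_neg hj0, if_neg hj4]

lemma dualE_mul_apply (F : Type) [Field F] {G : Type} [Group G] [Fintype G] [DecidableEq G]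
    (x : XG G) (j : Fin 5) (M : Matrix (XG G) (XG G) F) (y z : XG G) :
    (DualE F x j * M) y z = if rel j x y then M y z else 0 := by
  rw [Matrix.mul_apply, Finset.sum_eq_single y]
  · by_cases hr : rel j x y <;> simp [DualE, hr]
  · intro u _ hu
    have : y ≠ u := Ne.symm hu
    simp [DualE, this]
  · intro hmem
    exact absurd (Finset.mem_univ y) hmem

lemma mul_dualE_apply (F : Type) [Field F] {G : Type} [Group G] [Fintype G] [DecidableEq G]
    (x : XG G) (j : Fin 5) (M : Matrix (XG G) (XG G) F) (y z : XG G) :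
    (M * DualE F x j) y z = if rel j x z then M y z else 0 := by
  rw [Matrix.mul_apply, Finset.sum_eq_single z]
  · by_cases hr : rel j x z <;> simp [DualE, hr]
  · intro u _ hu
    simp [DualE, hu]
  · intro hmem
    exact absurd (Finset.mem_univ z) hmem

lemma key_lemma (F : Type) [Field F] {G : Type} [Group G] [Fintype G] [DecidableEq G]
    (x : XG G) (g h i : Fin 5)
    (hg0 : g ≠ 0) (hg4 : g ≠ 4) (hh0 : h ≠ 0) (hh4 : h ≠ 4) (hi0 : i ≠ 0) (hi4 : i ≠ 4)
    (hab : cIdx g ≠ cIdx h) (hac : cIdx g ≠ cIdx i) (hbc : cIdx h ≠ cIdx i) :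
    DualE F x g * Adj F h * DualE F x i * Adj F h * DualE F x g = DualE F x g := by
  have relg := fun (y z : XG G) => rel_iff hg0 hg4 y z
  have relh := fun (y z : XG G) => rel_iff hh0 hh4 y z
  have reli := fun (y z : XG G) => rel_iff hi0 hi4 y z
  ext y z
  rw [mul_assoc, mul_assoc, mul_assoc, dualE_mul_apply]
  by_cases hy : rel g x y
  case neg => simp [DualE, hy]
  rw [if_pos hy, Matrix.mul_apply]
  obtain ⟨hxy, hxya⟩ := (relg x y).mp hy
  by_cases hz : rel g x z
  case neg =>
    have hyz : y ≠ z := fun e => hz (e ▸ hy)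
    have inner0 : ∀ u : XG G, (DualE F x i * (Adj F h * DualE F x g) : Matrix (XG G) (XG G) F) u z = 0 := by
      intro u
      rw [dualE_mul_apply, mul_dualE_apply, if_neg hz, ite_self]
    simp only [inner0, mul_zero, Finset.sum_const_zero]
    simp [DualE, hyz]
  obtain ⟨hxz, hxza⟩ := (relg x z).mp hz
  have inner : ∀ u : XG G, (DualE F x i * (Adj F h * DualE F x g) : Matrix (XG G) (XG G) F) u z
      = if rel i x u then Adj F h u z else 0 := by
    intro u
    rw [dualE_mul_apply, mul_dualE_apply, if_pos hz]
  simp only [inner]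
  by_cases hyz : y = z
  · subst hyz
    obtain ⟨u₀, hub, huc⟩ := XG.exists2 (G := G) hbc (y.1 (cIdx h)) (x.1 (cIdx i))
    have hu0y : u₀ ≠ y := by
      intro e
      rw [e] at huc
      exact hxy (XG.ext2 hac hxya huc.symm)
    have hu0x : u₀ ≠ x := by
      intro e
      rw [e] at hub
      exact hxy (XG.ext2 hab hxya hub)
    rw [Finset.sum_eq_single u₀]
    · have h1 : rel h y u₀ := (relh y u₀).mpr ⟨Ne.symm hu0y, hub.symm⟩
      have h3 : rel h u₀ y := (relh u₀ y).mpr ⟨hu0y, hub⟩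
      have h2 : rel i x u₀ := (reli x u₀).mpr ⟨Ne.symm hu0x, huc.symm⟩
      simp [Adj, DualE, h1, h2, h3, hy]
    · intro u _ hu
      by_cases r1 : rel h y u
      · by_cases r2 : rel i x u
        · by_cases r3 : rel h u y
          · exfalso
            apply hu
            obtain ⟨_, e1⟩ := (relh y u).mp r1
            obtain ⟨_, e2⟩ := (reli x u).mp r2
            exact XG.ext2 hbc (e1.symm.trans hub.symm) (e2.symm.trans huc.symm)
          · simp [Adj, r3]
        · simp [r2]
      · simp [Adj, r1]
    · intro hmem
      exact absurd (Finset.mem_univ u₀) hmem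
  · have hsum : ∀ u ∈ (Finset.univ : Finset (XG G)),
        Adj F h y u * (if rel i x u then Adj F h u z else 0) = 0 := by
      intro u _
      by_cases r1 : rel h y u
      · by_cases r2 : rel i x u
        · by_cases r3 : rel h u z
          · exfalso
            apply hyz
            obtain ⟨_, e1⟩ := (relh y u).mp r1
            obtain ⟨_, e3⟩ := (relh u z).mp r3
            exact XG.ext2 hab (hxya.symm.trans hxza) (e1.trans e3)
          · simp [Adj, r3]
        · simp [r2]
      · simp [Adj, r1]
    rw [Finset.sum_eq_zero hsum]
    simp [DualE, hyz]

theorem stmt9 (F : Type) [Field F] (G : Type) [Group G] [Fintype G] [DecidableEq G]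
    (hcard : 3 ≤ Fintype.card G)
    (x : XG G) (g h i : Fin 5)
    (hghi : ({g, h, i} : Finset (Fin 5)) = {1, 2, 3}) :
    DualE F x g * Adj F h * DualE F x i * Adj F h * DualE F x g = DualE F x g := by
  fin_cases g <;> fin_cases h <;> fin_cases i <;>
    first
      | exact absurd hghi (by decide)
      | exact key_lemma F x _ _ _ (by decide) (by decide) (by decide) (by decide) (by decide)
          (by decide) (by decide) (by decide) (by decide)
end

section
/- Let G be any finite group with |G| ≥ 3 and let g,h ∈ {1,2,3} with g ≠ h. Then E_4*A_gE_h*A_gE_4* = E_4* + E_4*A_gE_4*. -/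
open Matrix

lemma XG_ext {G : Type} [Group G] {d e : Fin 3} (hde : d ≠ e) {w w' : XG G}
    (h1 : w.1 d = w'.1 d) (h2 : w.1 e = w'.1 e) : w = w' := by
  obtain ⟨v, hv⟩ := w
  obtain ⟨u, hu⟩ := w'
  apply Subtype.ext
  simp only at h1 h2 hv hu ⊢
  have key : v 0 = u 0 ∧ v 1 = u 1 := by
    fin_cases d <;> fin_cases e <;> simp_all <;>
      first
        | exact mul_left_cancel (hv.trans hu.symm)
        | exact mul_right_cancel (hv.trans hu.symm)
  funext i
  fin_cases i
  · exact key.1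
  · exact key.2
  · exact (by rw [← hv, ← hu, key.1, key.2] : v 2 = u 2)

lemma XG_exists {G : Type} [Group G] {d e : Fin 3} (hde : d ≠ e) (a b : G) :
    ∃ w : XG G, w.1 d = a ∧ w.1 e = b := by
  fin_cases d <;> fin_cases e <;> (try exact absurd rfl hde)
  · exact ⟨⟨![a, b, a * b], by simp⟩, by simp, by simp⟩
  · exact ⟨⟨![a, a⁻¹ * b, b], by simp⟩, by simp, by simp⟩
  · exact ⟨⟨![b, a, b * a], by simp⟩, by simp, by simp⟩
  · exact ⟨⟨![b * a⁻¹, a, b], by simp⟩, by simp, by simp⟩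
  · exact ⟨⟨![b, b⁻¹ * a, a], by simp⟩, by simp, by simp⟩
  · exact ⟨⟨![a * b⁻¹, b, a], by simp⟩, by simp, by simp⟩

lemma key_sum (F : Type) [Field F] {G : Type} [Group G] [Fintype G] [DecidableEq G]
    {d e : Fin 3} (hde : d ≠ e) (x y z : XG G)
    (h4y : ∀ i, x.1 i ≠ y.1 i) (h4z : ∀ i, x.1 i ≠ z.1 i) :
    (∑ w : XG G, (if y ≠ w ∧ y.1 d = w.1 d then (1 : F) else 0) *
        (if x ≠ w ∧ x.1 e = w.1 e then 1 else 0) *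
        (if w ≠ z ∧ w.1 d = z.1 d then 1 else 0)) =
      if y.1 d = z.1 d then 1 else 0 := by
  obtain ⟨w₀, hw₀d, hw₀e⟩ := XG_exists hde (y.1 d) (x.1 e)
  by_cases hyz : y.1 d = z.1 d
  · rw [if_pos hyz, Finset.sum_eq_single w₀]
    · have c1 : y ≠ w₀ := fun hh => h4y e (by rw [hh, hw₀e])
      have c2 : x ≠ w₀ := fun hh => h4y d (by rw [hh, hw₀d])
      have c3 : w₀ ≠ z := fun hh => h4z e (by rw [← hh, hw₀e])
      rw [if_pos ⟨c1, hw₀d.symm⟩, if_pos ⟨c2, hw₀e.symm⟩,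
        if_pos ⟨c3, hw₀d.trans hyz⟩]
      ring
    · intro b _ hb
      split_ifs with p1 p2 p3 <;> try ring_nf
      exact absurd (XG_ext hde (p1.2.symm.trans hw₀d.symm) (p2.2.symm.trans hw₀e.symm)) hb
    · intro habs
      exact absurd (Finset.mem_univ w₀) habs
  · rw [if_neg hyz]
    apply Finset.sum_eq_zero
    intro b _
    split_ifs with p1 p2 p3 <;> try ring_nf
    exact absurd (p1.2.trans p3.2) hyz

lemma DualE_eq_diagonal (F : Type) [Field F] {G : Type} [Group G] [DecidableEq G]
    (x : XG G) (i : Fin 5) :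
    DualE F x i = Matrix.diagonal (fun y => if rel i x y then (1 : F) else 0) := by
  ext y z
  by_cases hyz : y = z <;> simp [DualE, Matrix.diagonal_apply, hyz]

theorem stmt11 (F : Type) [Field F] (G : Type) [Group G] [Fintype G] [DecidableEq G]
    (hcard : 3 ≤ Fintype.card G)
    (x : XG G) (g h : Fin 5)
    (hg : g ∈ ({1, 2, 3} : Finset (Fin 5))) (hh : h ∈ ({1, 2, 3} : Finset (Fin 5)))
    (hgh : g ≠ h) :
    DualE F x 4 * Adj F g * DualE F x h * Adj F g * DualE F x 4 =
      DualE F x 4 + DualE F x 4 * Adj F g * DualE F x 4 := by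
  have hde : cIdx g ≠ cIdx h := by
    fin_cases hg <;> fin_cases hh <;> first | exact absurd rfl hgh | decide
  have hrg : ∀ y z : XG G, rel g y z ↔ (y ≠ z ∧ y.1 (cIdx g) = z.1 (cIdx g)) := by
    intro y z
    fin_cases hg <;> simp [rel]
  have hrh : ∀ y z : XG G, rel h y z ↔ (y ≠ z ∧ y.1 (cIdx h) = z.1 (cIdx h)) := by
    intro y z
    fin_cases hh <;> simp [rel]
  have hr4 : ∀ y z : XG G, rel 4 y z ↔ ∀ i, y.1 i ≠ z.1 i := by
    intro y z
    simp [rel]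
  ext y z
  simp only [DualE_eq_diagonal, Matrix.add_apply]
  rw [Matrix.mul_diagonal, Matrix.mul_apply]
  simp only [Matrix.mul_diagonal, Matrix.diagonal_mul, Matrix.diagonal_apply, Adj,
    Matrix.of_apply]
  by_cases h4y : rel 4 x y
  · by_cases h4z : rel 4 x z
    · simp only [h4y, h4z, if_true, mul_one, one_mul]
      have hsum := key_sum F hde x y z ((hr4 x y).1 h4y) ((hr4 x z).1 h4z)
      calc (∑ w : XG G, (if rel g y w then (1:F) else 0) *
              (if rel h x w then 1 else 0) * (if rel g w z then 1 else 0))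
          = if y.1 (cIdx g) = z.1 (cIdx g) then 1 else 0 := by
            rw [← hsum]
            apply Finset.sum_congr rfl
            intro w _
            simp only [hrg, hrh]
        _ = (if y = z then 1 else 0) + (if rel g y z then 1 else 0) := by
            simp only [hrg]
            by_cases hyz : y = z
            · subst hyz
              simp
            · simp only [hyz, if_false, hyz, false_and, zero_add]
              by_cases hd : y.1 (cIdx g) = z.1 (cIdx g) <;> simp [hd, hyz]
    · have hne : y ≠ z := fun hh => h4z (hh ▸ h4y)
      simp [h4y, h4z, hne]
  · simp [h4y]
end

section
/- Let G be any finite group with |G| = n ≥ 3 and let {g,h,i} = {1,2,3}. Then: (i) E_4*A_gE_4*A_gE_4* = (n−3)̄·E_4* + (n−4)̄·E_4*A_gE_4*, and (ii) E_4*A_gE_4*A_hE_4* = E_4*JE_4* − E_4* − E_4*A_gE_4* − E_4*A_hE_4* − E_4*A_gE_i*A_hE_4*, where (n−3)̄ and (n−4)̄ denote the images of the integers n−3 and n−4 in F, and J is the all-one matrix. -/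
open Matrix

set_option linter.unusedSectionVars false

section helpers
variable {G : Type} [Group G] [DecidableEq G]

lemma XG.ext2_s12 {w w' : XG G} {d d2 : Fin 3} (hd : d ≠ d2) (h1 : w.1 d = w'.1 d)
    (h2 : w.1 d2 = w'.1 d2) : w = w' := by
  obtain ⟨v, hv⟩ := w; obtain ⟨v', hv'⟩ := w'
  apply Subtype.ext
  have key : v 0 = v' 0 → v 1 = v' 1 → v 2 = v' 2 := fun a b => by rw [← hv, ← hv', a, b]
  have k2 : v 0 = v' 0 → v 2 = v' 2 → v 1 = v' 1 := fun a b => by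
    have := hv.trans b; rw [a, ← hv'] at this; exact mul_left_cancel this
  have k3 : v 1 = v' 1 → v 2 = v' 2 → v 0 = v' 0 := fun a b => by
    have := hv.trans b; rw [a, ← hv'] at this; exact mul_right_cancel this
  fin_cases d <;> fin_cases d2 <;> simp_all <;> (funext e; fin_cases e <;> simp_all)

def mk3 (d d2 : Fin 3) (a b : G) : XG G :=
  if d = 0 then (if d2 = 1 then ⟨![a, b, a*b], by simp⟩ else ⟨![a, a⁻¹*b, b], by simp⟩)
  else if d = 1 then (if d2 = 0 then ⟨![b, a, b*a], by simp⟩ else ⟨![b*a⁻¹, a, b], by simp⟩)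
  else (if d2 = 0 then ⟨![b, b⁻¹*a, a], by simp⟩ else ⟨![a*b⁻¹, b, a], by simp⟩)

lemma mk3_spec (d d2 : Fin 3) (hd : d ≠ d2) (a b : G) :
    (mk3 d d2 a b).1 d = a ∧ (mk3 d d2 a b).1 d2 = b := by
  fin_cases d <;> fin_cases d2 <;> simp_all [mk3]

set_option linter.unusedSectionVars false

lemma mk3_bij (d d2 : Fin 3) (hd : d ≠ d2) :
    Function.Bijective (fun p : G × G => mk3 d d2 p.1 p.2) := by
  constructor
  · rintro ⟨a, b⟩ ⟨a', b'⟩ hp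
    have s1 := mk3_spec d d2 hd a b
    have s2 := mk3_spec d d2 hd a' b'
    simp only at hp
    rw [hp] at s1
    exact Prod.ext (s2.1 ▸ s1.1.symm ▸ rfl) (s2.2 ▸ s1.2.symm ▸ rfl)
  · intro w
    refine ⟨(w.1 d, w.1 d2), ?_⟩
    have s := mk3_spec d d2 hd (w.1 d) (w.1 d2)
    exact XG.ext2_s12 hd s.1 s.2

variable [Fintype G] (F : Type) [Field F]

lemma sum_mk3 (d d2 : Fin 3) (hd : d ≠ d2) (f : XG G → F) :
    ∑ w : XG G, f w = ∑ a : G, ∑ b : G, f (mk3 d d2 a b) := by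
  rw [← Fintype.sum_prod_type']
  exact (Fintype.sum_bijective _ (mk3_bij d d2 hd) _ _ (fun p => rfl)).symm

lemma count3 (e1 e2 e3 : G) (h3 : 3 ≤ Fintype.card G) (h12 : e1 ≠ e2) (h13 : e1 ≠ e3) (h23 : e2 ≠ e3) :
    ∑ b : G, (if b ≠ e1 ∧ b ≠ e2 ∧ b ≠ e3 then (1:F) else 0)
      = ((Fintype.card G - 3 : ℤ) : F) := by
  classical
  rw [Finset.sum_ite, Finset.sum_const_zero, add_zero, Finset.sum_const, nsmul_eq_mul, mul_one]
  have hfilter : Finset.filter (fun b => b ≠ e1 ∧ b ≠ e2 ∧ b ≠ e3) Finset.univ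
      = Finset.univ \ {e1, e2, e3} := by
    ext b; simp
  have hc : ({e1, e2, e3} : Finset G).card = 3 := by
    rw [Finset.card_insert_of_notMem (by simp [h12, h13]),
      Finset.card_insert_of_notMem (by simp [h23]), Finset.card_singleton]
  rw [hfilter, Finset.card_sdiff_of_subset (Finset.subset_univ _), Finset.card_univ, hc]
  have : ((Fintype.card G - 3 : ℕ) : ℤ) = (Fintype.card G : ℤ) - 3 := by omega
  rw [← Int.cast_natCast, this]

lemma count4 (e1 e2 e3 e4 : G) (h12 : e1 ≠ e2) (h13 : e1 ≠ e3) (h14 : e1 ≠ e4)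
    (h23 : e2 ≠ e3) (h24 : e2 ≠ e4) (h34 : e3 ≠ e4) :
    ∑ b : G, (if b ≠ e1 ∧ b ≠ e2 ∧ b ≠ e3 ∧ b ≠ e4 then (1:F) else 0)
      = ((Fintype.card G - 4 : ℤ) : F) := by
  classical
  rw [Finset.sum_ite, Finset.sum_const_zero, add_zero, Finset.sum_const, nsmul_eq_mul, mul_one]
  have hfilter : Finset.filter (fun b => b ≠ e1 ∧ b ≠ e2 ∧ b ≠ e3 ∧ b ≠ e4) Finset.univ
      = Finset.univ \ {e1, e2, e3, e4} := by
    ext b; simp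
  have hc : ({e1, e2, e3, e4} : Finset G).card = 4 := by
    rw [Finset.card_insert_of_notMem (by simp [h12, h13, h14]),
      Finset.card_insert_of_notMem (by simp [h23, h24]),
      Finset.card_insert_of_notMem (by simp [h34]), Finset.card_singleton]
  have h4 : 4 ≤ Fintype.card G := by
    calc 4 = ({e1,e2,e3,e4} : Finset G).card := hc.symm
    _ ≤ _ := by rw [← Finset.card_univ]; exact Finset.card_le_card (Finset.subset_univ _)
  rw [hfilter, Finset.card_sdiff_of_subset (Finset.subset_univ _), Finset.card_univ, hc]
  have : ((Fintype.card G - 4 : ℕ) : ℤ) = (Fintype.card G : ℤ) - 4 := by omega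
  rw [← Int.cast_natCast, this]


lemma key1 (h3 : 3 ≤ Fintype.card G) (x y z : XG G) (d d2 d3 : Fin 3)
    (hd2 : d ≠ d2) (hd3 : d ≠ d3) (h23 : d2 ≠ d3)
    (hy : ∀ e, x.1 e ≠ y.1 e) (hz : ∀ e, x.1 e ≠ z.1 e) :
    ∑ w : XG G, (if (y ≠ w ∧ y.1 d = w.1 d) ∧ (∀ e, x.1 e ≠ w.1 e) ∧ (w ≠ z ∧ w.1 d = z.1 d)
        then (1:F) else 0)
      = (if y = z then ((Fintype.card G - 3 : ℤ):F) else 0)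
        + (if y ≠ z ∧ y.1 d = z.1 d then ((Fintype.card G - 4 : ℤ):F) else 0) := by
  have hcover : ∀ e : Fin 3, e = d ∨ e = d2 ∨ e = d3 := by
    intro e; fin_cases d <;> fin_cases d2 <;> fin_cases d3 <;> fin_cases e <;> simp_all
  by_cases hdz : y.1 d = z.1 d
  case neg =>
    have hyz : y ≠ z := fun hh => hdz (hh ▸ rfl)
    rw [Finset.sum_eq_zero, if_neg hyz, if_neg (by tauto), add_zero]
    intro w _
    rw [if_neg]; rintro ⟨⟨_, h1⟩, _, _, h2⟩; exact hdz (h1.trans h2)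
  case pos =>
    obtain ⟨hmd, hmd3⟩ := mk3_spec d d3 hd3 (y.1 d) (x.1 d3)
    set m := mk3 d d3 (y.1 d) (x.1 d3) with hm
    rw [sum_mk3 F d d2 hd2]
    have hout : ∀ a' ∈ Finset.univ, a' ≠ y.1 d →
        (∑ b : G, if (y ≠ mk3 d d2 a' b ∧ y.1 d = (mk3 d d2 a' b).1 d)
          ∧ (∀ e, x.1 e ≠ (mk3 d d2 a' b).1 e)
          ∧ ((mk3 d d2 a' b) ≠ z ∧ (mk3 d d2 a' b).1 d = z.1 d) then (1:F) else 0) = 0 := by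
      intro a' _ hne
      refine Finset.sum_eq_zero fun b _ => ?_
      obtain ⟨hwd, hwd2⟩ := mk3_spec d d2 hd2 a' b
      rw [if_neg]; rintro ⟨⟨-, h1⟩, -⟩; exact hne (hwd.symm.trans h1.symm)
    rw [Finset.sum_eq_single_of_mem (y.1 d) (Finset.mem_univ _) hout]
    -- distinctness facts
    have hyx2 : y.1 d2 ≠ x.1 d2 := (hy d2).symm
    have hzx2 : z.1 d2 ≠ x.1 d2 := (hz d2).symm
    have hyc : y.1 d2 ≠ m.1 d2 := by
      intro hh
      have : y = m := XG.ext2_s12 hd2 hmd.symm hh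
      exact hy d3 (this ▸ hmd3).symm
    have hzc : z.1 d2 ≠ m.1 d2 := by
      intro hh
      have : z = m := XG.ext2_s12 hd2 (hdz ▸ hmd.symm) hh
      exact hz d3 (this ▸ hmd3).symm
    have hxc : x.1 d2 ≠ m.1 d2 := by
      intro hh
      have : x = m := XG.ext2_s12 h23 hh hmd3.symm
      exact hy d (this ▸ hmd)
    have hiff : ∀ b : G,
        ((y ≠ mk3 d d2 (y.1 d) b ∧ y.1 d = (mk3 d d2 (y.1 d) b).1 d)
          ∧ (∀ e, x.1 e ≠ (mk3 d d2 (y.1 d) b).1 e)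
          ∧ ((mk3 d d2 (y.1 d) b) ≠ z ∧ (mk3 d d2 (y.1 d) b).1 d = z.1 d))
        ↔ (b ≠ y.1 d2 ∧ b ≠ z.1 d2 ∧ b ≠ x.1 d2 ∧ b ≠ m.1 d2) := by
      intro b
      obtain ⟨hwd, hwd2⟩ := mk3_spec d d2 hd2 (y.1 d) b
      constructor
      · rintro ⟨⟨hny, -⟩, hfar, hnz, -⟩
        refine ⟨?_, ?_, ?_, ?_⟩
        · intro hb; exact hny (XG.ext2_s12 hd2 hwd (hwd2.trans hb)).symm
        · intro hb; exact hnz (XG.ext2_s12 hd2 (hwd.trans hdz) (hwd2.trans hb))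
        · intro hb; exact hfar d2 (hwd2.trans hb).symm
        · intro hb
          have hwm : mk3 d d2 (y.1 d) b = m := XG.ext2_s12 hd2 (hwd.trans hmd.symm) (hwd2.trans hb)
          exact hfar d3 (hwm ▸ hmd3).symm
      · rintro ⟨h1, h2, h3', h4⟩
        refine ⟨⟨?_, hwd.symm⟩, ?_, ?_, hwd.trans hdz⟩
        · intro hh; exact h1 (hwd2.symm.trans (congrArg (fun t => t.1 d2) hh).symm)
        · intro e
          rcases hcover e with rfl | rfl | rfl
          · rw [hwd]; exact hy _
          · rw [hwd2]; exact fun hh => h3' hh.symm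
          · intro heq
            have hwm : mk3 d d2 (y.1 d) b = m :=
              XG.ext2_s12 hd3 (hwd.trans hmd.symm) (heq.symm.trans hmd3.symm)
            exact h4 (hwd2.symm.trans (congrArg (fun t => t.1 d2) hwm))
        · intro hh; exact h2 (hwd2.symm.trans (congrArg (fun t => t.1 d2) hh))
    by_cases hyz : y = z
    · subst hyz
      rw [if_pos rfl, if_neg (by tauto), add_zero]
      have hiff' : ∀ b : G,
          ((y ≠ mk3 d d2 (y.1 d) b ∧ y.1 d = (mk3 d d2 (y.1 d) b).1 d)
            ∧ (∀ e, x.1 e ≠ (mk3 d d2 (y.1 d) b).1 e)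
            ∧ ((mk3 d d2 (y.1 d) b) ≠ y ∧ (mk3 d d2 (y.1 d) b).1 d = y.1 d))
          ↔ (b ≠ y.1 d2 ∧ b ≠ x.1 d2 ∧ b ≠ m.1 d2) := by
        intro b
        refine (hiff b).trans ⟨fun hb => ⟨hb.1, hb.2.2⟩, fun hb => ⟨hb.1, hb.1, hb.2⟩⟩
      rw [Finset.sum_congr rfl (fun b _ => if_congr (hiff' b) rfl rfl)]
      exact count3 F _ _ _ h3 hyx2 hyc hxc
    · have hyz2 : y.1 d2 ≠ z.1 d2 := fun hh => hyz (XG.ext2_s12 hd2 hdz hh)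
      rw [if_neg hyz, if_pos ⟨hyz, hdz⟩, zero_add]
      rw [Finset.sum_congr rfl (fun b _ => if_congr (hiff b) rfl rfl)]
      exact count4 F _ _ _ _ hyz2 hyx2 hyc hzx2 hzc hxc

end helpers


variable {G : Type} [Group G] [DecidableEq G] [Fintype G] (F : Type) [Field F]

lemma rel4_iff (x y : XG G) : rel 4 x y ↔ ∀ e, x.1 e ≠ y.1 e := by
  simp [rel]

lemma DualE_mul_apply (x : XG G) (i : Fin 5) (M : Matrix (XG G) (XG G) F) (y z : XG G) :
    (DualE F x i * M) y z = if rel i x y then M y z else 0 := by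
  rw [Matrix.mul_apply]
  rw [Fintype.sum_eq_single y (fun w hw => by simp [DualE, Ne.symm hw])]
  by_cases hr : rel i x y <;> simp [DualE, hr]

lemma mul_DualE_apply (x : XG G) (i : Fin 5) (M : Matrix (XG G) (XG G) F) (y z : XG G) :
    (M * DualE F x i) y z = if rel i x z then M y z else 0 := by
  rw [Matrix.mul_apply]
  rw [Fintype.sum_eq_single z (fun w hw => by simp [DualE, hw])]
  by_cases hr : rel i x z <;> simp [DualE, hr]

lemma big_entry (x : XG G) (b c e : Fin 5) (y z : XG G) :
    ((DualE F x 4 * Adj F b * DualE F x c * Adj F e * DualE F x 4 :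
        Matrix (XG G) (XG G) F)) y z
      = if rel 4 x y ∧ rel 4 x z then
          (∑ w : XG G, if rel b y w ∧ rel c x w ∧ rel e w z then (1:F) else 0) else 0 := by
  have hassoc : DualE F x 4 * Adj F b * DualE F x c * Adj F e * DualE F x 4
      = DualE F x 4 * (Adj F b * DualE F x c * Adj F e) * DualE F x 4 := by
    simp only [mul_assoc]
  rw [hassoc, mul_DualE_apply, DualE_mul_apply]
  have hterm : ∀ w : XG G, ((Adj F b * DualE F x c : Matrix (XG G) (XG G) F)) y w * Adj F e w z
      = if rel b y w ∧ rel c x w ∧ rel e w z then (1:F) else 0 := by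
    intro w
    rw [mul_DualE_apply]
    by_cases h1 : rel b y w <;> by_cases h2 : rel c x w <;> by_cases h3 : rel e w z <;>
      simp [Adj, h1, h2, h3]
  rw [Matrix.mul_apply, Finset.sum_congr rfl fun w _ => hterm w]
  by_cases hy : rel 4 x y <;> by_cases hz : rel 4 x z <;> simp [hy, hz]

lemma sand_entry (x : XG G) (b : Fin 5) (y z : XG G) :
    ((DualE F x 4 * Adj F b * DualE F x 4 : Matrix (XG G) (XG G) F)) y z
      = if rel 4 x y ∧ rel 4 x z then (if rel b y z then (1:F) else 0) else 0 := by
  rw [mul_DualE_apply, DualE_mul_apply]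
  by_cases hy : rel 4 x y <;> by_cases hz : rel 4 x z <;> simp [Adj, hy, hz]

lemma allone_entry (x : XG G) (y z : XG G) :
    ((DualE F x 4 * AllOne F G * DualE F x 4 : Matrix (XG G) (XG G) F)) y z
      = if rel 4 x y ∧ rel 4 x z then (1:F) else 0 := by
  rw [mul_DualE_apply, DualE_mul_apply]
  by_cases hy : rel 4 x y <;> by_cases hz : rel 4 x z <;> simp [AllOne, hy, hz]

lemma key2 (x y z : XG G) (dg dh di : Fin 3)
    (hgh : dg ≠ dh) (hgi : dg ≠ di) (hhi : dh ≠ di)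
    (hy : ∀ e, x.1 e ≠ y.1 e) (hz : ∀ e, x.1 e ≠ z.1 e) :
    ∑ w : XG G, (if (y ≠ w ∧ y.1 dg = w.1 dg) ∧ (∀ e, x.1 e ≠ w.1 e)
        ∧ (w ≠ z ∧ w.1 dh = z.1 dh) then (1:F) else 0)
      = 1 - (if y = z then 1 else 0) - (if y ≠ z ∧ y.1 dg = z.1 dg then 1 else 0)
        - (if y ≠ z ∧ y.1 dh = z.1 dh then 1 else 0)
        - ∑ w : XG G, (if (y ≠ w ∧ y.1 dg = w.1 dg) ∧ (x ≠ w ∧ x.1 di = w.1 di)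
            ∧ (w ≠ z ∧ w.1 dh = z.1 dh) then (1:F) else 0) := by
  have hcover : ∀ e : Fin 3, e = dg ∨ e = dh ∨ e = di := by
    intro e; fin_cases dg <;> fin_cases dh <;> fin_cases di <;> fin_cases e <;> simp_all
  obtain ⟨hw0g, hw0h⟩ := mk3_spec dg dh hgh (y.1 dg) (z.1 dh)
  set w0 := mk3 dg dh (y.1 dg) (z.1 dh) with hw0
  have hred1 : ∀ w : XG G, w ≠ w0 →
      (if (y ≠ w ∧ y.1 dg = w.1 dg) ∧ (∀ e, x.1 e ≠ w.1 e)
        ∧ (w ≠ z ∧ w.1 dh = z.1 dh) then (1:F) else 0) = 0 := by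
    intro w hw
    rw [if_neg]
    rintro ⟨⟨-, h1⟩, -, -, h2⟩
    exact hw (XG.ext2_s12 hgh (h1.symm.trans hw0g.symm) (h2.trans hw0h.symm))
  have hred2 : ∀ w : XG G, w ≠ w0 →
      (if (y ≠ w ∧ y.1 dg = w.1 dg) ∧ (x ≠ w ∧ x.1 di = w.1 di)
        ∧ (w ≠ z ∧ w.1 dh = z.1 dh) then (1:F) else 0) = 0 := by
    intro w hw
    rw [if_neg]
    rintro ⟨⟨-, h1⟩, -, -, h2⟩
    exact hw (XG.ext2_s12 hgh (h1.symm.trans hw0g.symm) (h2.trans hw0h.symm))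
  rw [Fintype.sum_eq_single w0 hred1, Fintype.sum_eq_single w0 hred2]
  have hC1 : ((y ≠ w0 ∧ y.1 dg = w0.1 dg) ∧ (∀ e, x.1 e ≠ w0.1 e)
        ∧ (w0 ≠ z ∧ w0.1 dh = z.1 dh))
      ↔ (y.1 dh ≠ z.1 dh ∧ y.1 dg ≠ z.1 dg ∧ x.1 di ≠ w0.1 di) := by
    constructor
    · rintro ⟨⟨hny, -⟩, hfar, hnz, -⟩
      exact ⟨fun q2 => hny (XG.ext2_s12 hgh hw0g.symm (q2.trans hw0h.symm)),
        fun q1 => hnz (XG.ext2_s12 hgh (hw0g.trans q1) hw0h), hfar di⟩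
    · rintro ⟨q2, q1, q⟩
      refine ⟨⟨fun hh => q2 ((congrArg (fun t => t.1 dh) hh).trans hw0h), hw0g.symm⟩,
        ?_, fun hh => q1 (hw0g.symm.trans (congrArg (fun t => t.1 dg) hh)), hw0h⟩
      intro e
      rcases hcover e with rfl | rfl | rfl
      · rw [hw0g]; exact hy _
      · rw [hw0h]; exact hz _
      · exact q
  have hC2 : ((y ≠ w0 ∧ y.1 dg = w0.1 dg) ∧ (x ≠ w0 ∧ x.1 di = w0.1 di)
        ∧ (w0 ≠ z ∧ w0.1 dh = z.1 dh))
      ↔ (y.1 dh ≠ z.1 dh ∧ y.1 dg ≠ z.1 dg ∧ x.1 di = w0.1 di) := by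
    constructor
    · rintro ⟨⟨hny, -⟩, ⟨-, hq⟩, hnz, -⟩
      exact ⟨fun q2 => hny (XG.ext2_s12 hgh hw0g.symm (q2.trans hw0h.symm)),
        fun q1 => hnz (XG.ext2_s12 hgh (hw0g.trans q1) hw0h), hq⟩
    · rintro ⟨q2, q1, q⟩
      refine ⟨⟨fun hh => q2 ((congrArg (fun t => t.1 dh) hh).trans hw0h), hw0g.symm⟩,
        ⟨fun hh => hy dg ((congrArg (fun t => t.1 dg) hh).trans hw0g), q⟩,
        fun hh => q1 (hw0g.symm.trans (congrArg (fun t => t.1 dg) hh)), hw0h⟩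
  have hyz : y = z ↔ (y.1 dg = z.1 dg ∧ y.1 dh = z.1 dh) :=
    ⟨fun hh => ⟨hh ▸ rfl, hh ▸ rfl⟩, fun hh => XG.ext2_s12 hgh hh.1 hh.2⟩
  rw [if_congr hC1 rfl rfl, if_congr hC2 rfl rfl]
  by_cases q1 : y.1 dg = z.1 dg <;> by_cases q2 : y.1 dh = z.1 dh <;>
    by_cases q : x.1 di = w0.1 di <;>
    simp [q1, q2, q, hyz] <;> ring

theorem core (h3 : 3 ≤ Fintype.card G) (x : XG G) (g h i : Fin 5) (dg dh di : Fin 3)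
    (hrg : ∀ y z : XG G, rel g y z ↔ y ≠ z ∧ y.1 dg = z.1 dg)
    (hrh : ∀ y z : XG G, rel h y z ↔ y ≠ z ∧ y.1 dh = z.1 dh)
    (hri : ∀ y z : XG G, rel i y z ↔ y ≠ z ∧ y.1 di = z.1 di)
    (hgh : dg ≠ dh) (hgi : dg ≠ di) (hhi : dh ≠ di) :
    (DualE F x 4 * Adj F g * DualE F x 4 * Adj F g * DualE F x 4 =
      ((Fintype.card G - 3 : ℤ) : F) • DualE F x 4 +
        ((Fintype.card G - 4 : ℤ) : F) • (DualE F x 4 * Adj F g * DualE F x 4)) ∧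
    (DualE F x 4 * Adj F g * DualE F x 4 * Adj F h * DualE F x 4 =
      DualE F x 4 * AllOne F G * DualE F x 4 - DualE F x 4 -
        DualE F x 4 * Adj F g * DualE F x 4 - DualE F x 4 * Adj F h * DualE F x 4 -
        DualE F x 4 * Adj F g * DualE F x i * Adj F h * DualE F x 4) := by
  constructor
  · ext y z
    rw [big_entry, Matrix.add_apply, Matrix.smul_apply, Matrix.smul_apply, sand_entry]
    by_cases hfy : rel 4 x y
    · by_cases hfz : rel 4 x z
      · rw [if_pos ⟨hfy, hfz⟩, if_pos ⟨hfy, hfz⟩]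
        have hy' := (rel4_iff x y).mp hfy
        have hz' := (rel4_iff x z).mp hfz
        rw [Finset.sum_congr rfl (fun w _ => if_congr
          (and_congr (hrg y w) (and_congr (rel4_iff x w) (hrg w z))) rfl rfl)]
        rw [key1 F h3 x y z dg dh di hgh hgi hhi hy' hz']
        by_cases hyz : y = z
        · subst hyz
          simp [DualE, hrg y y, hfy, smul_eq_mul]
        · by_cases hco : y.1 dg = z.1 dg <;>
            simp [DualE, hrg y z, hyz, hco, hfy, smul_eq_mul]
      · have hyz : y ≠ z := fun hh => hfz (hh ▸ hfy)
        simp [hfy, hfz, hyz, DualE]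
    · simp [hfy, DualE]
  · ext y z
    rw [big_entry, Matrix.sub_apply, Matrix.sub_apply, Matrix.sub_apply, Matrix.sub_apply,
      allone_entry, sand_entry, sand_entry, big_entry]
    by_cases hfy : rel 4 x y
    · by_cases hfz : rel 4 x z
      · simp only [if_pos (show rel 4 x y ∧ rel 4 x z from ⟨hfy, hfz⟩)]
        have hy' := (rel4_iff x y).mp hfy
        have hz' := (rel4_iff x z).mp hfz
        rw [Finset.sum_congr rfl (fun w _ => if_congr
          (and_congr (hrg y w) (and_congr (rel4_iff x w) (hrh w z))) rfl rfl)]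
        rw [Finset.sum_congr rfl (fun w _ => if_congr
          (and_congr (hrg y w) (and_congr (hri x w) (hrh w z))) rfl rfl)]
        rw [key2 F x y z dg dh di hgh hgi hhi hy' hz']
        by_cases hyz : y = z
        · subst hyz
          simp [DualE, hrg y y, hrh y y, hfy]
        · simp [DualE, hrg y z, hrh y z, hyz, hfy]
      · have hyz : y ≠ z := fun hh => hfz (hh ▸ hfy)
        simp [hfy, hfz, hyz, DualE]
    · simp [hfy, DualE]

lemma rel_one : ∀ y z : XG G, rel 1 y z ↔ y ≠ z ∧ y.1 0 = z.1 0 := by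
  intro y z; simp [rel, cIdx, show (1 : Fin 5) ≠ 0 by decide, show (1 : Fin 5) ≠ 4 by decide]
lemma rel_two : ∀ y z : XG G, rel 2 y z ↔ y ≠ z ∧ y.1 1 = z.1 1 := by
  intro y z; simp [rel, cIdx, show (2 : Fin 5) ≠ 0 by decide, show (2 : Fin 5) ≠ 4 by decide]
lemma rel_three : ∀ y z : XG G, rel 3 y z ↔ y ≠ z ∧ y.1 2 = z.1 2 := by
  intro y z; simp [rel, cIdx, show (3 : Fin 5) ≠ 0 by decide, show (3 : Fin 5) ≠ 4 by decide]

theorem stmt12 (F : Type) [Field F] (G : Type) [Group G] [Fintype G] [DecidableEq G]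
    (hcard : 3 ≤ Fintype.card G)
    (x : XG G) (g h i : Fin 5)
    (hghi : ({g, h, i} : Finset (Fin 5)) = {1, 2, 3}) :
    (DualE F x 4 * Adj F g * DualE F x 4 * Adj F g * DualE F x 4 =
      ((Fintype.card G - 3 : ℤ) : F) • DualE F x 4 +
        ((Fintype.card G - 4 : ℤ) : F) • (DualE F x 4 * Adj F g * DualE F x 4)) ∧
    (DualE F x 4 * Adj F g * DualE F x 4 * Adj F h * DualE F x 4 =
      DualE F x 4 * AllOne F G * DualE F x 4 - DualE F x 4 -
        DualE F x 4 * Adj F g * DualE F x 4 - DualE F x 4 * Adj F h * DualE F x 4 -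
        DualE F x 4 * Adj F g * DualE F x i * Adj F h * DualE F x 4) := by
  have hg : g ∈ ({1, 2, 3} : Finset (Fin 5)) := by rw [← hghi]; simp
  have hh2 : h ∈ ({1, 2, 3} : Finset (Fin 5)) := by rw [← hghi]; simp
  have hi2 : i ∈ ({1, 2, 3} : Finset (Fin 5)) := by rw [← hghi]; simp
  fin_cases hg <;> fin_cases hh2 <;> fin_cases hi2 <;>
    first
    | exact absurd hghi (by decide)
    | exact core F hcard x _ _ _ 0 1 2 rel_one rel_two rel_three
        (by decide) (by decide) (by decide)
    | exact core F hcard x _ _ _ 0 2 1 rel_one rel_three rel_two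
        (by decide) (by decide) (by decide)
    | exact core F hcard x _ _ _ 1 0 2 rel_two rel_one rel_three
        (by decide) (by decide) (by decide)
    | exact core F hcard x _ _ _ 1 2 0 rel_two rel_three rel_one
        (by decide) (by decide) (by decide)
    | exact core F hcard x _ _ _ 2 0 1 rel_three rel_one rel_two
        (by decide) (by decide) (by decide)
    | exact core F hcard x _ _ _ 2 1 0 rel_three rel_two rel_one
        (by decide) (by decide) (by decide)
end
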